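/- arXiv:2206.07625 — 2 statements merged into one kernel-verified Lean document; each statement's English description precedes it below -/
import Mathlib

section
/- For σ = 1 and any real s with 0 < s, the function G(s,s) = (2 + 4s - s^{3/2})/(1+s) - s^{3/2}/(1+s) = (2 + 4s - 2s^{3/2})/(1+s) is positive for all 0 < s < γ** and has a unique positive root γ** with 4.86 < γ** < 4.87. -/
lemma rpow_three_halves (s : ℝ) (hs : 0 ≤ s) :
    s ^ ((3 : ℝ) / 2) = (Real.sqrt s) ^ 3 := by
  rw [Real.sqrt_eq_rpow, ← Real.rpow_natCast (s ^ ((1:ℝ)/2)) 3, ← Real.rpow_mul hs]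
  norm_num

/-- For σ = 1, G(s,s) = (2 + 4s - 2 s^{3/2})/(1+s) has a unique positive root
γ** with 4.86 < γ** < 4.87, and G(s,s) > 0 for all 0 < s < γ**. -/
theorem stmt0 :
    ∃ γ : ℝ, 4.86 < γ ∧ γ < 4.87 ∧
      (2 + 4 * γ - 2 * γ ^ ((3 : ℝ) / 2)) / (1 + γ) = 0 ∧
      (∀ s : ℝ, 0 < s → s < γ →
        0 < (2 + 4 * s - 2 * s ^ ((3 : ℝ) / 2)) / (1 + s)) ∧
      (∀ s : ℝ, 0 < s →
        (2 + 4 * s - 2 * s ^ ((3 : ℝ) / 2)) / (1 + s) = 0 → s = γ) := by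
  have hcont : ContinuousOn (fun t : ℝ => 2 + 4*t^2 - 2*t^3)
      (Set.Icc (2.2046:ℝ) 2.2068) := by fun_prop
  have hmem : (0:ℝ) ∈ Set.Icc ((fun t : ℝ => 2 + 4*t^2 - 2*t^3) 2.2068)
      ((fun t : ℝ => 2 + 4*t^2 - 2*t^3) 2.2046) := by
    constructor <;> norm_num
  obtain ⟨τ, hτmem, hτ0⟩ := intermediate_value_Icc' (by norm_num) hcont hmem
  obtain ⟨hτl, hτu⟩ := hτmem
  simp only at hτ0
  have hτ2 : (2:ℝ) < τ := by linarith
  have hτpos : (0:ℝ) < τ := by linarith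
  have hsq : Real.sqrt (τ^2) = τ := Real.sqrt_sq hτpos.le
  refine ⟨τ^2, by nlinarith, by nlinarith, ?_, ?_, ?_⟩
  · rw [rpow_three_halves _ (by positivity), hsq]
    have : 2 + 4 * τ^2 - 2 * τ^3 = 0 := by linarith
    rw [this, zero_div]
  · intro s hs hsγ
    set t := Real.sqrt s with ht
    have hts : t^2 = s := Real.sq_sqrt hs.le
    have htpos : 0 < t := Real.sqrt_pos.2 hs
    have htτ : t < τ := by
      rw [← hsq]; exact Real.sqrt_lt_sqrt hs.le hsγ
    rw [rpow_three_halves _ hs.le, ← ht]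
    have hnum : 0 < 2 + 4 * s - 2 * t^3 := by
      rcases le_or_gt t 2 with h2 | h2
      · nlinarith [sq_nonneg t, mul_nonneg (sq_nonneg t) (by linarith : (0:ℝ) ≤ 2 - t)]
      · have key : 0 < (τ - t) * (2*(t^2 + t*τ + τ^2) - 4*(t + τ)) :=
          mul_pos (by linarith) (by nlinarith)
        nlinarith [key]
    have hden : 0 < 1 + s := by linarith
    positivity
  · intro s hs heq
    set t := Real.sqrt s with ht
    have hts : t^2 = s := Real.sq_sqrt hs.le
    have htpos : 0 < t := Real.sqrt_pos.2 hs
    rw [rpow_three_halves _ hs.le, ← ht] at heq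
    have hden : (1 + s) ≠ 0 := by positivity
    have hnum : 2 + 4 * s - 2 * t^3 = 0 := by
      field_simp at heq; linarith
    have ht2 : 2 < t := by
      by_contra h
      push_neg at h
      nlinarith [mul_nonneg (sq_nonneg t) (by linarith : (0:ℝ) ≤ 2 - t)]
    have htτ : t = τ := by
      rcases lt_trichotomy t τ with h | h | h
      · exfalso
        have key : 0 < (τ - t) * (2*(t^2 + t*τ + τ^2) - 4*(t + τ)) :=
          mul_pos (by linarith) (by nlinarith)
        nlinarith [key]
      · exact h
      · exfalso
        have key : 0 < (t - τ) * (2*(t^2 + t*τ + τ^2) - 4*(t + τ)) :=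
          mul_pos (by linarith) (by nlinarith)
        nlinarith [key]
    rw [← hts, htτ]
end

section
/- Let H be a real inner product space, and let φ^{n+1}, φ^n, φ^{n-1} ∈ H, τ_{n+1}, τ_n > 0, γ_{n+1} = τ_{n+1}/τ_n, γ_{n+2} > 0, and σ ∈ [1/2, 1] with γ_{n+1}, γ_{n+2} ≤ γ**(σ), where G(s,z) ≥ 0 for s, z in this range. Define F₂^{n+σ}φ = (1/τ_{n+1})[ ((1+2σγ_{n+1})/(1+γ_{n+1})) φ^{n+1} - (1+(2σ-1)γ_{n+1}) φ^n + ((2σ-1)γ_{n+1}²/(1+γ_{n+1})) φ^{n-1} ]. Then ⟨φ^{n+1} - φ^n, F₂^{n+σ}φ⟩ ≥ [g(γ_{n+2}) + (1/2)G(γ_{n+1}, γ_{n+2})] ‖φ^{n+1} - φ^n‖²/τ_{n+1} - g(γ_{n+1}) ‖φ^n - φ^{n-1}‖²/τ_n, where g(γ) = (2σ-1)γ^{3/2}/(2(1+γ)) and G(s,z) = (2+4σs-(2σ-1)s^{3/2})/(1+s) - (2σ-1)z^{3/2}/(1+z). -/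
open scoped RealInnerProductSpace

/-- The key gradient-structure inequality for the variable-step weighted BDF2 formula:
⟨φ^{n+1} - φ^n, F₂^{n+σ}φ⟩ ≥ [g(γ_{n+2}) + ½G(γ_{n+1},γ_{n+2})]‖φ^{n+1}-φ^n‖²/τ_{n+1}
  - g(γ_{n+1})‖φ^n-φ^{n-1}‖²/τ_n. -/
theorem stmt7 {H : Type*} [NormedAddCommGroup H] [InnerProductSpace ℝ H]
    (φ1 φ0 φm1 : H) (τn τn1 σ γn2 γstar : ℝ)
    (hτn : 0 < τn) (hτn1 : 0 < τn1)
    (hσ1 : 1 / 2 ≤ σ) (hσ2 : σ ≤ 1)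
    (γn1 : ℝ) (hγn1 : γn1 = τn1 / τn) (hγn2 : 0 < γn2)
    (hγn1le : γn1 ≤ γstar) (hγn2le : γn2 ≤ γstar)
    (hG : ∀ s z : ℝ, 0 < s → s ≤ γstar → 0 < z → z ≤ γstar →
      0 ≤ (2 + 4 * σ * s - (2 * σ - 1) * s ^ ((3 : ℝ) / 2)) / (1 + s)
          - (2 * σ - 1) * z ^ ((3 : ℝ) / 2) / (1 + z)) :
    ⟪φ1 - φ0, (1 / τn1) •
        (((1 + 2 * σ * γn1) / (1 + γn1)) • φ1
          - (1 + (2 * σ - 1) * γn1) • φ0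
          + ((2 * σ - 1) * γn1 ^ 2 / (1 + γn1)) • φm1)⟫ ≥
      ((2 * σ - 1) * γn2 ^ ((3 : ℝ) / 2) / (2 * (1 + γn2))
        + (1 / 2) * ((2 + 4 * σ * γn1 - (2 * σ - 1) * γn1 ^ ((3 : ℝ) / 2)) / (1 + γn1)
            - (2 * σ - 1) * γn2 ^ ((3 : ℝ) / 2) / (1 + γn2)))
        * ‖φ1 - φ0‖ ^ 2 / τn1
      - ((2 * σ - 1) * γn1 ^ ((3 : ℝ) / 2) / (2 * (1 + γn1))) * ‖φ0 - φm1‖ ^ 2 / τn := by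
  have hγ1pos : 0 < γn1 := by rw [hγn1]; positivity
  have h1γ : (0:ℝ) < 1 + γn1 := by linarith
  have h1γ2 : (0:ℝ) < 1 + γn2 := by linarith
  have hτ : τn1 = γn1 * τn := by rw [hγn1]; field_simp
  set u := φ1 - φ0 with hu
  set v := φ0 - φm1 with hv
  set s : ℝ := Real.sqrt γn1 with hsdef
  have hs : s ^ 2 = γn1 := Real.sq_sqrt hγ1pos.le
  have hspos : 0 < s := Real.sqrt_pos.mpr hγ1pos
  have hrpow : γn1 ^ ((3:ℝ)/2) = γn1 * s := by
    rw [show (3:ℝ)/2 = 1 + 1/2 by norm_num, Real.rpow_add hγ1pos, Real.rpow_one,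
      hsdef, Real.sqrt_eq_rpow]
  have hvec : ((1 + 2 * σ * γn1) / (1 + γn1)) • φ1
          - (1 + (2 * σ - 1) * γn1) • φ0
          + ((2 * σ - 1) * γn1 ^ 2 / (1 + γn1)) • φm1
      = ((1 + 2 * σ * γn1) / (1 + γn1)) • u
          - ((2 * σ - 1) * γn1 ^ 2 / (1 + γn1)) • v := by
    have hB : (1 + (2 * σ - 1) * γn1)
        = (1 + 2 * σ * γn1) / (1 + γn1) + (2 * σ - 1) * γn1 ^ 2 / (1 + γn1) := by
      field_simp; ring
    rw [hB, hu, hv]; module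
  rw [hvec, real_inner_smul_right, inner_sub_right, real_inner_smul_right,
    real_inner_smul_right, real_inner_self_eq_norm_sq]
  set N := ‖u‖ ^ 2 with hN
  set M := ‖v‖ ^ 2 with hM
  set P := ⟪u, v⟫ with hP
  have hPle : P ≤ ‖u‖ * ‖v‖ := real_inner_le_norm u v
  have hkey : γn1 * P ≤ s * (N + γn1 * M) / 2 := by
    rw [hN, hM, ← hs]
    nlinarith [mul_nonneg hspos.le (sq_nonneg (‖u‖ - s * ‖v‖)),
      mul_le_mul_of_nonneg_left hPle (mul_pos hspos hspos).le]
  rw [ge_iff_le, ← sub_nonneg]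
  have hNnn : 0 ≤ N := sq_nonneg _
  have hMnn : 0 ≤ M := sq_nonneg _
  have hEq : 1 / τn1 * ((1 + 2 * σ * γn1) / (1 + γn1) * N
        - (2 * σ - 1) * γn1 ^ 2 / (1 + γn1) * P)
      - (((2 * σ - 1) * γn2 ^ ((3 : ℝ) / 2) / (2 * (1 + γn2))
        + 1 / 2 * ((2 + 4 * σ * γn1 - (2 * σ - 1) * γn1 ^ ((3 : ℝ) / 2)) / (1 + γn1)
            - (2 * σ - 1) * γn2 ^ ((3 : ℝ) / 2) / (1 + γn2))) * N / τn1
        - (2 * σ - 1) * γn1 ^ ((3 : ℝ) / 2) / (2 * (1 + γn1)) * M / τn)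
      = ((2 * σ - 1) / ((1 + γn1) * τn)) * (s * (N + γn1 * M) / 2 - γn1 * P) := by
    rw [hrpow, hτ]
    field_simp
    ring
  rw [hEq]
  have hσ' : 0 ≤ 2 * σ - 1 := by linarith
  have := sub_nonneg.mpr hkey
  positivity
end
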